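/- With O_{1,m} as above, Tr(O_{1,m} Y_{1,m} O_{1,m}ᵀ Y_{1,m}) = 2 ⟨1|O_{1,m}|1⟩ · ⟨m|O_{1,m}|m⟩ = 2 ∏_{n=m+1}^{d} cos(λ_{1,n}). -/

import Mathlib

/-!
Since `(i Y_{1,n})³ = -i Y_{1,n}`, Rodrigues' formula makes each factor `exp(i λ Y_{1,n})` the
Givens rotation by `λ` in the `(1, n)`-plane. For `n > m` these rotations fix `|m⟩`, so column `m`
of `O = O_{1,m}` is `|m⟩`. Applying the rotations to `|1⟩` one at a time, each multiplies the
`|1⟩`-coordinate by `cos λ_{1,n}` and creates a component along `|n⟩`, which the remaining rotations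
(all for indices `≠ n`) never feed back into `|1⟩`. Hence `O_{1m} = O_{m1} = 0`, `O_{mm} = 1`,
`O_{11} = ∏ cos λ_{1,n}`, and `Tr(A Y_{1,m} Aᵀ Y_{1,m}) = 2 (A_{11} A_{mm} - A_{1m} A_{m1})` for every `A`.
-/

open Matrix Complex

/-- `Y m n = -i |m⟩⟨n| + i |n⟩⟨m|`. -/
noncomputable def Ymat {d : ℕ} (m n : Fin d) : Matrix (Fin d) (Fin d) ℂ :=
  (-Complex.I) • Matrix.single m n 1 + Complex.I • Matrix.single n m 1

/-- `O_{1,m} = ∏_{n > m} exp(i Y_{1,n} λ_{1,n})`, product taken in increasing order of `n`;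
the index `⟨0, hd⟩ : Fin d` plays the role of the basis vector `|1⟩`. -/
noncomputable def O1m {d : ℕ} (hd : 0 < d) (lam : Fin d → ℝ) (m : Fin d) :
    Matrix (Fin d) (Fin d) ℂ :=
  (((List.finRange d).filter (fun n => m < n)).map
    (fun n => NormedSpace.exp ((Complex.I * (lam n : ℂ)) • Ymat ⟨0, hd⟩ n))).prod

section Rodrigues

variable {𝔸 : Type*} [Ring 𝔸] [Algebra ℝ 𝔸] {K : 𝔸}

theorem pow_two_mul_add_one_of_pow_three_eq_neg (hK : K ^ 3 = -K) (j : ℕ) :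
    K ^ (2 * j + 1) = (-1 : ℝ) ^ j • K := by
  induction j with
  | zero => simp
  | succ j ih =>
    rw [show 2 * (j + 1) + 1 = 2 * j + 1 + 2 by ring, pow_add, ih, smul_mul_assoc, ← pow_succ',
      hK, pow_succ, mul_neg_one, neg_smul, smul_neg]

theorem pow_two_mul_add_two_of_pow_three_eq_neg (hK : K ^ 3 = -K) (j : ℕ) :
    K ^ (2 * j + 2) = (-1 : ℝ) ^ j • K ^ 2 := by
  rw [pow_succ, pow_two_mul_add_one_of_pow_three_eq_neg hK, smul_mul_assoc, ← sq]

variable [TopologicalSpace 𝔸] [IsTopologicalRing 𝔸] [ContinuousSMul ℝ 𝔸] [T2Space 𝔸]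

/-- Rodrigues' formula. -/
theorem exp_smul_of_pow_three_eq_neg (hK : K ^ 3 = -K) (t : ℝ) :
    NormedSpace.exp (t • K) = 1 + Real.sin t • K + (1 - Real.cos t) • K ^ 2 := by
  rw [NormedSpace.exp_eq_tsum ℝ]
  refine HasSum.tsum_eq ?_
  rw [add_right_comm]
  refine HasSum.even_add_odd ?_ ?_
  · -- `K ^ (2 * j) = -(-1) ^ j • K ^ 2` except at `j = 0`; `hasSum_ite_eq` corrects that term.
    convert ((Real.hasSum_cos t).neg.smul_const (K ^ 2)).add (hasSum_ite_eq 0 (1 + K ^ 2)) using 1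
    · ext (_ | j)
      · simp
      · rw [if_neg j.succ_ne_zero, add_zero, smul_pow, Nat.mul_succ,
          pow_two_mul_add_two_of_pow_three_eq_neg hK, smul_smul, smul_smul, pow_succ, pow_succ]
        congr 1
        ring
    · rw [sub_smul, one_smul, neg_smul]
      abel
  · convert (Real.hasSum_sin t).smul_const K using 2 with j
    rw [smul_pow, pow_two_mul_add_one_of_pow_three_eq_neg hK, smul_smul, smul_smul]
    congr 1
    ring

end Rodrigues

theorem Matrix.list_prod_mulVec_eq_self {ι R : Type*} [Fintype ι] [DecidableEq ι] [Semiring R]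
    {l : List (Matrix ι ι R)} {v : ι → R} (h : ∀ A ∈ l, A *ᵥ v = v) : l.prod *ᵥ v = v := by
  induction l with
  | nil => exact one_mulVec v
  | cons A l ih =>
    rw [List.prod_cons, ← mulVec_mulVec, ih fun B hB => h B (List.mem_cons_of_mem A hB),
      h A List.mem_cons_self]

theorem Matrix.trace_mul_single_mul_mul_single {ι α : Type*} [Fintype ι] [DecidableEq ι]
    [CommRing α] (A B : Matrix ι ι α) (a b c e : ι) (x y : α) :
    (A * single a b x * B * single c e y).trace = x * y * A e a * B b c := by
  rw [trace_mul_comm, ← Matrix.mul_assoc, ← Matrix.mul_assoc, single_mul_mul_single,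
    trace_single_mul, smul_eq_mul]
  ring

theorem trace_mul_Ymat_mul_transpose_mul_Ymat {d : ℕ} (A : Matrix (Fin d) (Fin d) ℂ) (z m : Fin d) :
    (A * Ymat z m * Aᵀ * Ymat z m).trace = 2 * (A z z * A m m - A z m * A m z) := by
  simp only [Ymat, Matrix.mul_add, Matrix.add_mul, Matrix.mul_smul, Matrix.smul_mul, trace_add,
    trace_smul, trace_mul_single_mul_mul_single, transpose_apply, smul_eq_mul]
  linear_combination 2 * (A m z * A z m - A m m * A z z) * I_sq

section Givens

variable {d : ℕ}

noncomputable def rotGen (z n : Fin d) : Matrix (Fin d) (Fin d) ℂ := single z n 1 - single n z 1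

theorem I_mul_smul_Ymat (z n : Fin d) (t : ℝ) : (I * t) • Ymat z n = t • rotGen z n := by
  have hI : I * t * I = -t := by rw [mul_right_comm, I_mul_I, neg_one_mul]
  rw [Ymat, rotGen, smul_add, smul_smul, smul_smul, mul_neg, hI, neg_neg, ← Complex.coe_smul,
    neg_smul, ← sub_eq_add_neg, ← smul_sub]

theorem rotGen_pow_three {z n : Fin d} (h : z ≠ n) : rotGen z n ^ 3 = -rotGen z n := by
  simp only [pow_succ, pow_zero, one_mul, rotGen, sub_mul, mul_sub, single_mul_single_same,
    single_mul_single_of_ne _ _ _ _ h, single_mul_single_of_ne _ _ _ _ h.symm, mul_one, zero_mul]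
  abel

theorem rotGen_mulVec_apply (z n : Fin d) (w : Fin d → ℂ) (k : Fin d) :
    (rotGen z n *ᵥ w) k = (if k = z then w n else 0) - (if k = n then w z else 0) := by
  simp [rotGen, sub_mulVec, single_mulVec, Function.update_apply]

theorem rotGen_mulVec_single_one {z n m : Fin d} (hz : m ≠ z) (hn : m ≠ n) :
    rotGen z n *ᵥ Pi.single m 1 = 0 := by
  ext k
  simp [rotGen_mulVec_apply, hz.symm, hn.symm]

noncomputable def givens (z n : Fin d) (t : ℝ) : Matrix (Fin d) (Fin d) ℂ :=
  1 + Real.sin t • rotGen z n + (1 - Real.cos t) • rotGen z n ^ 2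

theorem exp_I_mul_smul_Ymat {z n : Fin d} (h : z ≠ n) (t : ℝ) :
    NormedSpace.exp ((I * t) • Ymat z n) = givens z n t := by
  rw [I_mul_smul_Ymat, exp_smul_of_pow_three_eq_neg (rotGen_pow_three h), givens]

theorem givens_mulVec (z n : Fin d) (t : ℝ) (w : Fin d → ℂ) :
    givens z n t *ᵥ w =
      w + Real.sin t • (rotGen z n *ᵥ w) + (1 - Real.cos t) • (rotGen z n *ᵥ rotGen z n *ᵥ w) := by
  rw [givens, add_mulVec, add_mulVec, one_mulVec, smul_mulVec, smul_mulVec, sq, mulVec_mulVec]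

theorem givens_mulVec_apply_of_ne {z n k : Fin d} (hz : k ≠ z) (hn : k ≠ n) (t : ℝ)
    (w : Fin d → ℂ) : (givens z n t *ᵥ w) k = w k := by
  simp only [givens_mulVec, Pi.add_apply, Pi.smul_apply, rotGen_mulVec_apply, if_neg hz,
    if_neg hn, sub_zero, smul_zero, add_zero]

theorem givens_mulVec_apply_left {z n : Fin d} (h : z ≠ n) (t : ℝ) (w : Fin d → ℂ) :
    (givens z n t *ᵥ w) z = Real.cos t * w z + Real.sin t * w n := by
  simp only [givens_mulVec, Pi.add_apply, Pi.smul_apply, rotGen_mulVec_apply, if_neg h,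
    if_neg h.symm, real_smul]
  push_cast
  ring

theorem givens_mulVec_single_one {z n m : Fin d} (hz : m ≠ z) (hn : m ≠ n) (t : ℝ) :
    givens z n t *ᵥ Pi.single m 1 = Pi.single m 1 := by
  rw [givens_mulVec, rotGen_mulVec_single_one hz hn, mulVec_zero, smul_zero, smul_zero, add_zero,
    add_zero]

variable (lam : Fin d → ℝ)

theorem list_prod_givens_mulVec_single_one_apply_of_notMem {z k : Fin d} {l : List (Fin d)}
    (hz : k ≠ z) (hl : k ∉ l) :
    ((l.map fun n => givens z n (lam n)).prod *ᵥ Pi.single z 1) k = 0 := by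
  induction l with
  | nil => simp [hz]
  | cons n l ih =>
    rw [List.mem_cons, not_or] at hl
    rw [List.map_cons, List.prod_cons, ← mulVec_mulVec, givens_mulVec_apply_of_ne hz hl.1, ih hl.2]

theorem list_prod_givens_mulVec_single_one_apply_self {z : Fin d} {l : List (Fin d)}
    (hz : z ∉ l) (hl : l.Nodup) :
    ((l.map fun n => givens z n (lam n)).prod *ᵥ Pi.single z 1) z =
      (l.map fun n => (Real.cos (lam n) : ℂ)).prod := by
  induction l with
  | nil => simp
  | cons n l ih =>
    rw [List.mem_cons, not_or] at hz
    rw [List.nodup_cons] at hl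
    rw [List.map_cons, List.prod_cons, ← mulVec_mulVec, givens_mulVec_apply_left hz.1,
      ih hz.2 hl.2, list_prod_givens_mulVec_single_one_apply_of_notMem lam (Ne.symm hz.1) hl.1,
      mul_zero, add_zero, List.map_cons, List.prod_cons]

theorem O1m_eq_list_prod_givens (hd : 0 < d) {m : Fin d} (hm : 0 < (m : ℕ)) :
    O1m hd lam m = (((List.finRange d).filter (m < ·)).map fun n => givens ⟨0, hd⟩ n (lam n)).prod :=
  congrArg List.prod <| List.map_congr_left fun n hn =>
    exp_I_mul_smul_Ymat (Fin.ne_of_lt (hm.trans (by simpa using hn))) (lam n)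

end Givens

/-- `Tr(O_{1,m} Y_{1,m} O_{1,m}ᵀ Y_{1,m}) = 2⟨1|O_{1,m}|1⟩⟨m|O_{1,m}|m⟩ = 2 ∏_{n>m} cos λ_{1,n}`. -/
theorem trace_O1m_Y_O1mT_Y {d : ℕ} (hd : 0 < d) (lam : Fin d → ℝ)
    (m : Fin d) (hm : 0 < (m : ℕ)) :
    (O1m hd lam m * Ymat ⟨0, hd⟩ m * (O1m hd lam m)ᵀ * Ymat ⟨0, hd⟩ m).trace =
        2 * (O1m hd lam m ⟨0, hd⟩ ⟨0, hd⟩) * (O1m hd lam m m m) ∧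
    (O1m hd lam m * Ymat ⟨0, hd⟩ m * (O1m hd lam m)ᵀ * Ymat ⟨0, hd⟩ m).trace =
        2 * ∏ n ∈ Finset.univ.filter (fun n : Fin d => m < n), ((Real.cos (lam n) : ℝ) : ℂ) := by
  set z : Fin d := ⟨0, hd⟩
  set l := (List.finRange d).filter (fun n => m < n)
  have hlm : ∀ n ∈ l, m < n := fun n hn => by simpa [l] using hn
  have hzm : z < m := hm
  have hO : O1m hd lam m = (l.map fun n => givens z n (lam n)).prod :=
    O1m_eq_list_prod_givens lam hd hm
  have hentry (j k : Fin d) : O1m hd lam m k j = (O1m hd lam m *ᵥ Pi.single j 1) k := by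
    simp
  have hcol : O1m hd lam m *ᵥ Pi.single m 1 = Pi.single m 1 := hO ▸
    list_prod_mulVec_eq_self fun A hA => by
      obtain ⟨n, hn, rfl⟩ := List.mem_map.mp hA
      exact givens_mulVec_single_one hzm.ne' (hlm n hn).ne _
  have hzm_entry : O1m hd lam m z m = 0 := by simp [hentry, hcol, hzm.ne]
  have hmz_entry : O1m hd lam m m z = 0 := by
    rw [hentry, hO]
    exact list_prod_givens_mulVec_single_one_apply_of_notMem lam hzm.ne' fun h => (hlm m h).false
  have hmm_entry : O1m hd lam m m m = 1 := by simp [hentry, hcol]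
  have hzz_entry : O1m hd lam m z z = ∏ n ∈ Finset.univ.filter (m < ·), (Real.cos (lam n) : ℂ) := by
    rw [hentry, hO, list_prod_givens_mulVec_single_one_apply_self lam
      (fun h => (hzm.trans (hlm z h)).false) ((List.nodup_finRange d).filter _),
      ← List.prod_toFinset _ ((List.nodup_finRange d).filter _)]
    simp [List.toFinset_filter]
  rw [trace_mul_Ymat_mul_transpose_mul_Ymat, hzm_entry, hmz_entry]
  constructor
  · ring
  · rw [hzz_entry, hmm_entry]
    ring
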